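/- arXiv:2212.03985 — 2 statements merged into one kernel-verified Lean document; each statement's English description precedes it below -/
import Mathlib

section
/- For matrices/vectors over the reals: given a matrix A ∈ ℝ^{m×n}, vectors b ∈ ℝ^m, d ∈ ℝ^n, and scalar c ∈ ℝ, exactly one of the following holds: (1) there exists x ∈ ℝ^n with A x ≤ b and dᵀ x ≤ c; (2) there exist y ∈ ℝ^m and z ∈ ℝ with y ≥ 0, z ≥ 0, Aᵀ y + z • d = 0, and bᵀ y + c·z < 0. -/
open Matrix Finset

namespace MotzkinAux
open Classical in
noncomputable def elimMat {ι : Type} {n : ℕ} (A : Matrix ι (Fin (n+1)) ℝ) :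
    Matrix (ι ⊕ ι × ι) (Fin n) ℝ :=
  fun s k => Sum.elim (fun i => if A i 0 = 0 then A i k.succ else 0)
    (fun p => if 0 < A p.1 0 ∧ A p.2 0 < 0 then
        (-A p.2 0) * A p.1 k.succ + A p.1 0 * A p.2 k.succ else 0) s

open Classical in
noncomputable def elimVec {ι : Type} {n : ℕ} (A : Matrix ι (Fin (n+1)) ℝ) (b : ι → ℝ) :
    ι ⊕ ι × ι → ℝ :=
  Sum.elim (fun i => if A i 0 = 0 then b i else 0)
    (fun p => if 0 < A p.1 0 ∧ A p.2 0 < 0 then (-A p.2 0) * b p.1 + A p.1 0 * b p.2 else 0)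

open Classical in
noncomputable def liftY {ι : Type} [Fintype ι] {n : ℕ} (A : Matrix ι (Fin (n+1)) ℝ)
    (y' : ι ⊕ ι × ι → ℝ) : ι → ℝ :=
  fun i => (if A i 0 = 0 then y' (.inl i) else 0)
    + ∑ j, (if 0 < A i 0 ∧ A j 0 < 0 then (-A j 0) * y' (.inr (i,j)) else 0)
    + ∑ j, (if 0 < A j 0 ∧ A i 0 < 0 then (A j 0) * y' (.inr (j,i)) else 0)

open Classical in
lemma sum_liftY {ι : Type} [Fintype ι] {n : ℕ} (A : Matrix ι (Fin (n+1)) ℝ)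
    (y' : ι ⊕ ι × ι → ℝ) (v : ι → ℝ) :
    ∑ i, v i * liftY A y' i
      = ∑ i, (if A i 0 = 0 then v i * y' (.inl i) else 0)
        + ∑ i, ∑ j, (if 0 < A i 0 ∧ A j 0 < 0 then
            ((-A j 0) * v i + A i 0 * v j) * y' (.inr (i,j)) else 0) := by
  simp only [liftY, mul_add, Finset.sum_add_distrib, Finset.mul_sum]
  have h3 : ∑ i, ∑ j, v i * (if 0 < A j 0 ∧ A i 0 < 0 then (A j 0) * y' (.inr (j,i)) else 0)
      = ∑ i, ∑ j, v j * (if 0 < A i 0 ∧ A j 0 < 0 then (A i 0) * y' (.inr (i,j)) else 0) :=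
    Finset.sum_comm
  rw [h3, add_assoc, ← Finset.sum_add_distrib]
  congr 1
  · exact Finset.sum_congr rfl fun i _ => by split_ifs <;> ring
  · refine Finset.sum_congr rfl fun i _ => ?_
    rw [← Finset.sum_add_distrib]
    refine Finset.sum_congr rfl fun j _ => ?_
    split_ifs <;> ring
end MotzkinAux

namespace MotzkinAux
open Classical in
lemma liftY_nonneg {ι : Type} [Fintype ι] {n : ℕ} (A : Matrix ι (Fin (n+1)) ℝ)
    {y' : ι ⊕ ι × ι → ℝ} (hy' : 0 ≤ y') : 0 ≤ liftY A y' := by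
  intro i
  have h1 : (0:ℝ) ≤ (if A i 0 = 0 then y' (.inl i) else 0) := by
    split_ifs; exacts [hy' _, le_refl 0]
  have h2 : (0:ℝ) ≤ ∑ j, (if 0 < A i 0 ∧ A j 0 < 0 then (-A j 0) * y' (.inr (i,j)) else 0) := by
    refine Finset.sum_nonneg fun j _ => ?_
    split_ifs with h
    · exact mul_nonneg (by linarith [h.2]) (hy' _)
    · exact le_refl 0
  have h3 : (0:ℝ) ≤ ∑ j, (if 0 < A j 0 ∧ A i 0 < 0 then (A j 0) * y' (.inr (j,i)) else 0) := by
    refine Finset.sum_nonneg fun j _ => ?_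
    split_ifs with h
    · exact mul_nonneg (le_of_lt h.1) (hy' _)
    · exact le_refl 0
  simpa [liftY] using add_nonneg (add_nonneg h1 h2) h3

open Classical in
lemma col_zero {ι : Type} [Fintype ι] {n : ℕ} (A : Matrix ι (Fin (n+1)) ℝ)
    (y' : ι ⊕ ι × ι → ℝ) : ∑ i, A i 0 * liftY A y' i = 0 := by
  rw [sum_liftY]
  have h1 : ∑ i, (if A i 0 = 0 then A i 0 * y' (.inl i) else 0) = 0 := by
    refine Finset.sum_eq_zero fun i _ => ?_
    split_ifs with h
    · rw [h, zero_mul]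
    · rfl
  have h2 : ∑ i, ∑ j, (if 0 < A i 0 ∧ A j 0 < 0 then
      ((-A j 0) * A i 0 + A i 0 * A j 0) * y' (.inr (i,j)) else 0) = 0 := by
    refine Finset.sum_eq_zero fun i _ => Finset.sum_eq_zero fun j _ => ?_
    split_ifs
    · ring
    · rfl
  rw [h1, h2, add_zero]

open Classical in
lemma col_succ {ι : Type} [Fintype ι] {n : ℕ} (A : Matrix ι (Fin (n+1)) ℝ)
    (y' : ι ⊕ ι × ι → ℝ) (k : Fin n) :
    ∑ i, A i k.succ * liftY A y' i = ((elimMat A)ᵀ.mulVec y') k := by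
  rw [sum_liftY]
  simp only [mulVec, dotProduct, transpose_apply, Fintype.sum_sum_type, elimMat,
    Fintype.sum_prod_type, Sum.elim_inl, Sum.elim_inr]
  congr 1
  · exact Finset.sum_congr rfl fun i _ => by split_ifs <;> ring
  · exact Finset.sum_congr rfl fun i _ => Finset.sum_congr rfl fun j _ => by split_ifs <;> ring

open Classical in
lemma dot_lift {ι : Type} [Fintype ι] {n : ℕ} (A : Matrix ι (Fin (n+1)) ℝ)
    (b : ι → ℝ) (y' : ι ⊕ ι × ι → ℝ) :
    b ⬝ᵥ liftY A y' = elimVec A b ⬝ᵥ y' := by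
  simp only [dotProduct]
  rw [sum_liftY]
  simp only [elimVec, Fintype.sum_sum_type, Fintype.sum_prod_type, Sum.elim_inl, Sum.elim_inr]
  congr 1
  · exact Finset.sum_congr rfl fun i _ => by split_ifs <;> ring
  · exact Finset.sum_congr rfl fun i _ => Finset.sum_congr rfl fun j _ => by split_ifs <;> ring
end MotzkinAux

namespace MotzkinAux
open Classical in
lemma feasible_of_elim {ι : Type} [Fintype ι] {n : ℕ} (A : Matrix ι (Fin (n+1)) ℝ)
    (b : ι → ℝ) (x' : Fin n → ℝ) (hx' : (elimMat A).mulVec x' ≤ elimVec A b) :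
    ∃ x : Fin (n+1) → ℝ, A.mulVec x ≤ b := by
  set r : ι → ℝ := fun i => ∑ k, A i k.succ * x' k with hr
  set S : Finset ι := Finset.univ.filter (fun i => 0 < A i 0) with hS
  set T : Finset ι := Finset.univ.filter (fun i => A i 0 < 0) with hT
  set u : ι → ℝ := fun i => (b i - r i) / A i 0 with hu
  have hpair : ∀ i ∈ S, ∀ j ∈ T, u j ≤ u i := by
    intro i hi j hj
    have hi' : 0 < A i 0 := by simpa [hS] using hi
    have hj' : A j 0 < 0 := by simpa [hT] using hj
    have h := hx' (.inr (i, j))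
    simp only [mulVec, dotProduct, elimMat, elimVec, Sum.elim_inr, hi', hj', and_true,
      if_true, if_pos (And.intro hi' hj')] at h
    have hsum : ∑ k, ((-A j 0) * A i k.succ + A i 0 * A j k.succ) * x' k
        = (-A j 0) * r i + A i 0 * r j := by
      simp only [hr, Finset.mul_sum, ← Finset.sum_add_distrib]
      exact Finset.sum_congr rfl fun k _ => by ring
    rw [hsum] at h
    show (b j - r j) / A j 0 ≤ (b i - r i) / A i 0
    rw [← neg_div_neg_eq (b j - r j) (A j 0), div_le_div_iff₀ (by linarith) hi']
    nlinarith [h]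
  -- choose x0
  obtain ⟨x0, hx0⟩ : ∃ x0 : ℝ, (∀ i ∈ S, x0 ≤ u i) ∧ (∀ j ∈ T, u j ≤ x0) := by
    rcases T.eq_empty_or_nonempty with hTe | hTne
    · rcases S.eq_empty_or_nonempty with hSe | hSne
      · exact ⟨0, by simp [hSe, hTe]⟩
      · exact ⟨S.inf' hSne u, fun i hi => Finset.inf'_le u hi, by simp [hTe]⟩
    · refine ⟨T.sup' hTne u, fun i hi => ?_, fun j hj => Finset.le_sup' u hj⟩
      exact (Finset.sup'_le_iff hTne u).2 fun j hj => hpair i hi j hj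
  refine ⟨Fin.cons x0 x', fun i => ?_⟩
  have hmv : A.mulVec (Fin.cons x0 x') i = A i 0 * x0 + r i := by
    simp only [mulVec, dotProduct, Fin.sum_univ_succ, Fin.cons_zero, Fin.cons_succ, hr]
  rw [hmv]
  rcases lt_trichotomy (A i 0) 0 with hneg | hzero | hpos
  · have := hx0.2 i (by simp [hT, hneg])
    rw [hu] at this
    have h2 : b i - r i ≥ A i 0 * x0 := by
      calc A i 0 * x0 ≤ A i 0 * ((b i - r i) / A i 0) :=
            (mul_le_mul_left_of_neg hneg).2 this
        _ = b i - r i := by rw [mul_comm, div_mul_cancel₀ _ (ne_of_lt hneg)]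
    linarith
  · have h := hx' (.inl i)
    simp only [mulVec, dotProduct, elimMat, elimVec, Sum.elim_inl, if_pos hzero] at h
    rw [hzero, zero_mul, zero_add]
    simpa [hr] using h
  · have := hx0.1 i (by simp [hS, hpos])
    rw [hu] at this
    have h2 : A i 0 * x0 ≤ b i - r i := by
      calc A i 0 * x0 ≤ A i 0 * ((b i - r i) / A i 0) := by
            exact (mul_le_mul_iff_right₀ hpos).2 this
        _ = b i - r i := by rw [mul_comm, div_mul_cancel₀ _ (ne_of_gt hpos)]
    linarith
end MotzkinAux

namespace MotzkinAux
lemma farkas_aux : ∀ (n : ℕ) (ι : Type) [Fintype ι] [DecidableEq ι]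
    (A : Matrix ι (Fin n) ℝ) (b : ι → ℝ),
    (¬ ∃ x : Fin n → ℝ, A.mulVec x ≤ b) →
    ∃ y : ι → ℝ, 0 ≤ y ∧ Aᵀ.mulVec y = 0 ∧ b ⬝ᵥ y < 0 := by
  intro n
  induction n with
  | zero =>
    intro ι _ _ A b h
    have hb : ∃ i, b i < 0 := by
      by_contra hb
      push_neg at hb
      exact h ⟨fun k => 0, fun i => by simpa [mulVec, dotProduct] using hb i⟩
    obtain ⟨i, hi⟩ := hb
    refine ⟨Pi.single i 1, ?_, ?_, ?_⟩
    · intro j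
      by_cases hj : j = i <;> simp [hj, Pi.single_apply]
    · exact funext fun k => k.elim0
    · simpa [dotProduct_single] using hi
  | succ n ih =>
    intro ι _ _ A b h
    classical
    have helim : ¬ ∃ x' : Fin n → ℝ, (elimMat A).mulVec x' ≤ elimVec A b := by
      rintro ⟨x', hx'⟩
      exact h (feasible_of_elim A b x' hx')
    obtain ⟨y', hy'0, hy'col, hy'dot⟩ := ih (ι ⊕ ι × ι) (elimMat A) (elimVec A b) helim
    refine ⟨liftY A y', liftY_nonneg A hy'0, ?_, ?_⟩
    · funext k
      induction k using Fin.cases with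
      | zero =>
        show ∑ i, Aᵀ 0 i * liftY A y' i = 0
        simpa [transpose_apply] using col_zero A y'
      | succ k =>
        show ∑ i, Aᵀ k.succ i * liftY A y' i = 0
        have := col_succ A y' k
        simp only [transpose_apply]
        rw [this, hy'col]
        rfl
    · rw [dot_lift A b y']; exact hy'dot
end MotzkinAux

/-- Motzkin Transposition Theorem (Ben-Israel form): exactly one of the two
systems has a solution. -/
theorem motzkin_transposition
    (m n : ℕ) (A : Matrix (Fin m) (Fin n) ℝ) (b : Fin m → ℝ)
    (d : Fin n → ℝ) (c : ℝ) :
    Xor'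
      (∃ x : Fin n → ℝ, A.mulVec x ≤ b ∧ d ⬝ᵥ x ≤ c)
      (∃ (y : Fin m → ℝ) (z : ℝ), 0 ≤ y ∧ 0 ≤ z ∧
        Aᵀ.mulVec y + z • d = 0 ∧ b ⬝ᵥ y + c * z < 0) := by
  classical
  have hnotboth : ¬ ((∃ x : Fin n → ℝ, A.mulVec x ≤ b ∧ d ⬝ᵥ x ≤ c) ∧
      (∃ (y : Fin m → ℝ) (z : ℝ), 0 ≤ y ∧ 0 ≤ z ∧
        Aᵀ.mulVec y + z • d = 0 ∧ b ⬝ᵥ y + c * z < 0)) := by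
    rintro ⟨⟨x, hAx, hdx⟩, y, z, hy, hz, hcert, hneg⟩
    have h0 : (Aᵀ.mulVec y + z • d) ⬝ᵥ x = 0 := by rw [hcert, zero_dotProduct]
    rw [add_dotProduct, smul_dotProduct] at h0
    have h1 : (Aᵀ.mulVec y) ⬝ᵥ x = y ⬝ᵥ A.mulVec x := by
      rw [Matrix.dotProduct_mulVec, Matrix.mulVec_transpose]
    have h2 : y ⬝ᵥ A.mulVec x ≤ y ⬝ᵥ b :=
      Finset.sum_le_sum fun i _ => mul_le_mul_of_nonneg_left (hAx i) (hy i)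
    have h3 : z * (d ⬝ᵥ x) ≤ z * c := mul_le_mul_of_nonneg_left hdx hz
    have h4 : y ⬝ᵥ b = b ⬝ᵥ y := dotProduct_comm y b
    have h5 : z • (d ⬝ᵥ x) = z * (d ⬝ᵥ x) := rfl
    rw [h1, h5] at h0
    linarith
  by_cases hP : ∃ x : Fin n → ℝ, A.mulVec x ≤ b ∧ d ⬝ᵥ x ≤ c
  · exact Or.inl ⟨hP, fun hQ => hnotboth ⟨hP, hQ⟩⟩
  · refine Or.inr ⟨?_, hP⟩
    set A' : Matrix (Fin m ⊕ Unit) (Fin n) ℝ :=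
      fun s k => Sum.elim (fun i => A i k) (fun _ => d k) s with hA'
    set b' : Fin m ⊕ Unit → ℝ := Sum.elim b (fun _ => c) with hb'
    have hinf : ¬ ∃ x : Fin n → ℝ, A'.mulVec x ≤ b' := by
      rintro ⟨x, hx⟩
      refine hP ⟨x, fun i => ?_, ?_⟩
      · simpa [hA', hb', mulVec, dotProduct] using hx (.inl i)
      · simpa [hA', hb', mulVec, dotProduct] using hx (.inr ())
    obtain ⟨y', hy'0, hy'col, hy'dot⟩ := MotzkinAux.farkas_aux n (Fin m ⊕ Unit) A' b' hinf
    refine ⟨fun i => y' (.inl i), y' (.inr ()), fun i => hy'0 _, hy'0 _, ?_, ?_⟩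
    · funext k
      have hcol := congrFun hy'col k
      simp only [mulVec, dotProduct, transpose_apply, Fintype.sum_sum_type, hA',
        Sum.elim_inl, Sum.elim_inr, Pi.zero_apply, Finset.univ_unique,
        Finset.sum_singleton, Matrix.transpose, Matrix.of_apply] at hcol
      simp only [Pi.add_apply, Pi.smul_apply, smul_eq_mul, Pi.zero_apply, mulVec,
        dotProduct, transpose_apply]
      linear_combination hcol
    · have : b' ⬝ᵥ y' = b ⬝ᵥ (fun i => y' (.inl i)) + c * y' (.inr ()) := by
        simp [hb', dotProduct, Fintype.sum_sum_type]
      rw [← this]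
      exact hy'dot
end

section
/- Let G ∈ ℝ^{k×n}, g ∈ ℝ^k with {p : G p ≤ g} nonempty, and let H ∈ ℝ^{m×n}, h ∈ ℝ^m. Then {p : G p ≤ g} ⊆ {p : H p ≤ h} if and only if there exists a matrix X ∈ ℝ^{k×m} with X ≥ 0 entrywise, Gᵀ X = Hᵀ, and for each i, gᵀ X_{:,i} ≤ h_i, where X_{:,i} denotes the i-th column of X. -/
open Matrix Finset

private lemma farkas_homog {n : ℕ} :
    ∀ (k : ℕ) (v : Fin k → (Fin n → ℝ)) (c : Fin n → ℝ),
      (¬ ∃ y : Fin k → ℝ, (∀ i, 0 ≤ y i) ∧ ∑ i, y i • v i = c) →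
      ∃ x : Fin n → ℝ, (∀ i, v i ⬝ᵥ x ≤ 0) ∧ 0 < c ⬝ᵥ x := by
  intro k
  induction k with
  | zero =>
    intro v c hc
    have hc0 : c ≠ 0 := by
      rintro rfl
      exact hc ⟨fun i => i.elim0, fun i => i.elim0, by simp⟩
    refine ⟨c, fun i => i.elim0, ?_⟩
    have h1 : 0 ≤ c ⬝ᵥ c := Finset.sum_nonneg fun i _ => mul_self_nonneg _
    rcases h1.lt_or_eq with h | h
    · exact h
    · exact absurd (dotProduct_self_eq_zero.mp h.symm) hc0
  | succ k ih =>
    intro v c hc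
    set w : Fin k → Fin n → ℝ := fun i => v i.castSucc with hw
    set u : Fin n → ℝ := v (Fin.last k) with hu
    have hcw : ¬ ∃ y : Fin k → ℝ, (∀ i, 0 ≤ y i) ∧ ∑ i, y i • w i = c := by
      rintro ⟨y, hy, hsum⟩
      refine hc ⟨Fin.snoc y 0, ?_, ?_⟩
      · intro i
        refine Fin.lastCases ?_ (fun j => ?_) i <;> simp [hy]
      · rw [Fin.sum_univ_castSucc]
        simpa using hsum
    obtain ⟨x, hx, hcx⟩ := ih w c hcw
    by_cases hux : u ⬝ᵥ x ≤ 0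
    · refine ⟨x, fun i => ?_, hcx⟩
      refine Fin.lastCases hux (fun j => hx j) i
    · push_neg at hux
      set w' : Fin k → Fin n → ℝ := fun i => w i - ((w i ⬝ᵥ x) / (u ⬝ᵥ x)) • u with hw'
      set c' : Fin n → ℝ := c - ((c ⬝ᵥ x) / (u ⬝ᵥ x)) • u with hc'
      have hcw' : ¬ ∃ y : Fin k → ℝ, (∀ i, 0 ≤ y i) ∧ ∑ i, y i • w' i = c' := by
        rintro ⟨y, hy, hsum⟩
        have h1 : 0 ≤ (c ⬝ᵥ x) / (u ⬝ᵥ x) := le_of_lt (div_pos hcx hux)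
        have h2 : ∑ i, y i * ((w i ⬝ᵥ x) / (u ⬝ᵥ x)) ≤ 0 := by
          refine Finset.sum_nonpos fun i _ => mul_nonpos_of_nonneg_of_nonpos (hy i) ?_
          exact div_nonpos_of_nonpos_of_nonneg (hx i) hux.le
        have hlam : 0 ≤ (c ⬝ᵥ x) / (u ⬝ᵥ x) - ∑ i, y i * ((w i ⬝ᵥ x) / (u ⬝ᵥ x)) := by
          linarith
        have hsum2 : ∑ i, y i • w i - (∑ i, y i * ((w i ⬝ᵥ x) / (u ⬝ᵥ x))) • u
            = c - ((c ⬝ᵥ x) / (u ⬝ᵥ x)) • u := by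
          rw [Finset.sum_smul, ← Finset.sum_sub_distrib]
          rw [hc'] at hsum
          rw [← hsum]
          refine Finset.sum_congr rfl fun i _ => ?_
          rw [hw']
          rw [smul_sub, smul_smul]
        refine hc ⟨Fin.snoc y ((c ⬝ᵥ x) / (u ⬝ᵥ x) - ∑ i, y i * ((w i ⬝ᵥ x) / (u ⬝ᵥ x))), ?_, ?_⟩
        · intro i
          refine Fin.lastCases ?_ (fun j => ?_) i <;> simp [hlam, hy]
        · rw [Fin.sum_univ_castSucc]
          simp only [Fin.snoc_castSucc, Fin.snoc_last]
          have h3 : ∑ i, y i • w i = c - ((c ⬝ᵥ x) / (u ⬝ᵥ x)) • u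
              + (∑ i, y i * ((w i ⬝ᵥ x) / (u ⬝ᵥ x))) • u := by
            rw [← hsum2]; abel
          rw [h3]
          module
      obtain ⟨x', hx', hcx'⟩ := ih w' c' hcw'
      have hune : u ⬝ᵥ x ≠ 0 := ne_of_gt hux
      refine ⟨x' - ((u ⬝ᵥ x') / (u ⬝ᵥ x)) • x, fun i => ?_, ?_⟩
      · refine Fin.lastCases ?_ (fun j => ?_) i
        · rw [dotProduct_sub, dotProduct_smul]
          simp only [smul_eq_mul]
          rw [div_mul_eq_mul_div, mul_div_assoc, div_self hune]
          simp [hu]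
        · have h4 := hx' j
          rw [hw'] at h4
          rw [sub_dotProduct, smul_dotProduct] at h4
          rw [dotProduct_sub, dotProduct_smul]
          simp only [smul_eq_mul] at h4 ⊢
          calc v j.castSucc ⬝ᵥ x' - u ⬝ᵥ x' / u ⬝ᵥ x * (v j.castSucc ⬝ᵥ x)
              = w j ⬝ᵥ x' - w j ⬝ᵥ x / u ⬝ᵥ x * (u ⬝ᵥ x') := by rw [hw]; ring
            _ ≤ 0 := h4
      · rw [hc'] at hcx'
        rw [sub_dotProduct, smul_dotProduct] at hcx'
        rw [dotProduct_sub, dotProduct_smul]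
        simp only [smul_eq_mul] at hcx' ⊢
        calc (0:ℝ) < c ⬝ᵥ x' - c ⬝ᵥ x / u ⬝ᵥ x * (u ⬝ᵥ x') := hcx'
          _ = c ⬝ᵥ x' - u ⬝ᵥ x' / u ⬝ᵥ x * (c ⬝ᵥ x) := by ring

private lemma snoc_dot {n : ℕ} (a : Fin n → ℝ) (s : ℝ) (xh : Fin (n+1) → ℝ) :
    (Fin.snoc a s : Fin (n+1) → ℝ) ⬝ᵥ xh
      = a ⬝ᵥ (fun j => xh j.castSucc) + s * xh (Fin.last n) := by
  simp [dotProduct, Fin.sum_univ_castSucc]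

private lemma farkas_affine {k n : ℕ} (A : Matrix (Fin k) (Fin n) ℝ) (b : Fin k → ℝ)
    (hne : ∃ p, A.mulVec p ≤ b) (c : Fin n → ℝ) (d : ℝ)
    (himp : ∀ p, A.mulVec p ≤ b → c ⬝ᵥ p ≤ d) :
    ∃ y : Fin k → ℝ, (∀ i, 0 ≤ y i) ∧ Aᵀ.mulVec y = c ∧ b ⬝ᵥ y ≤ d := by
  set V : Fin (k+1) → Fin (n+1) → ℝ :=
    Fin.snoc (fun i => Fin.snoc (A i) (b i)) (Fin.snoc 0 1) with hV
  set C : Fin (n+1) → ℝ := Fin.snoc c d with hC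
  have key : ∃ Y : Fin (k+1) → ℝ, (∀ i, 0 ≤ Y i) ∧ ∑ i, Y i • V i = C := by
    by_contra hcon
    obtain ⟨xh, hxh, hCx⟩ := farkas_homog (k+1) V C hcon
    set x : Fin n → ℝ := fun j => xh j.castSucc with hxdef
    set t : ℝ := xh (Fin.last n) with htdef
    have hdot : ∀ i : Fin k, A i ⬝ᵥ x + b i * t ≤ 0 := by
      intro i
      have h := hxh i.castSucc
      rw [hV] at h
      rw [Fin.snoc_castSucc, snoc_dot] at h
      exact h
    have ht : t ≤ 0 := by
      have h := hxh (Fin.last k)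
      rw [hV] at h
      rw [Fin.snoc_last, snoc_dot] at h
      simpa using h
    have hctx : 0 < c ⬝ᵥ x + d * t := by
      rw [hC, snoc_dot] at hCx
      exact hCx
    rcases ht.lt_or_eq with htlt | hteq
    · -- t < 0 : x / (-t) is feasible and violates c ⬝ p ≤ d
      set p : Fin n → ℝ := (-t)⁻¹ • x with hp
      have hnt : 0 < -t := by linarith
      have hfeas : A.mulVec p ≤ b := by
        intro i
        rw [hp, Matrix.mulVec_smul]
        have h1 : A.mulVec x i = A i ⬝ᵥ x := rfl
        have h2 : A i ⬝ᵥ x ≤ b i * (-t) := by have := hdot i; nlinarith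
        have : (-t)⁻¹ * (A i ⬝ᵥ x) ≤ b i := by
          rw [inv_mul_le_iff₀ hnt]; linarith [h2]
        simpa [h1] using this
      have h3 := himp p hfeas
      rw [hp, dotProduct_smul] at h3
      have h4 : c ⬝ᵥ x ≤ d * (-t) := by
        have := (inv_mul_le_iff₀ hnt).mp (by simpa using h3)
        linarith
      nlinarith
    · -- t = 0 : direction of unboundedness
      obtain ⟨p0, hp0⟩ := hne
      have hAx : ∀ i, A i ⬝ᵥ x ≤ 0 := by
        intro i; have := hdot i; rw [hteq] at this; simpa using this
      have hcx : 0 < c ⬝ᵥ x := by rw [hteq] at hctx; simpa using hctx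
      set s : ℝ := max 0 ((d - c ⬝ᵥ p0 + 1) / (c ⬝ᵥ x)) with hs
      have hs0 : 0 ≤ s := le_max_left _ _
      have hfeas : A.mulVec (p0 + s • x) ≤ b := by
        intro i
        rw [Matrix.mulVec_add, Matrix.mulVec_smul]
        have h1 : A.mulVec x i = A i ⬝ᵥ x := rfl
        have h2 := hp0 i
        have h3 : s * (A i ⬝ᵥ x) ≤ 0 := mul_nonpos_of_nonneg_of_nonpos hs0 (hAx i)
        simp only [Pi.add_apply, Pi.smul_apply, smul_eq_mul, h1]
        calc A.mulVec p0 i + s * (A i ⬝ᵥ x) ≤ A.mulVec p0 i := by linarith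
          _ ≤ b i := h2
      have h5 := himp _ hfeas
      rw [dotProduct_add, dotProduct_smul] at h5
      have h6 : (d - c ⬝ᵥ p0 + 1) / (c ⬝ᵥ x) ≤ s := le_max_right _ _
      have h7 : d - c ⬝ᵥ p0 + 1 ≤ s * (c ⬝ᵥ x) := by
        rw [div_le_iff₀ hcx] at h6; linarith
      simp only [smul_eq_mul] at h5
      linarith
  obtain ⟨Y, hY, hsum⟩ := key
  refine ⟨fun i => Y i.castSucc, fun i => hY _, ?_, ?_⟩
  · funext j
    have h := congrFun hsum j.castSucc
    rw [Finset.sum_apply, Fin.sum_univ_castSucc] at h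
    simp only [hV, hC, Pi.smul_apply, Fin.snoc_castSucc, Fin.snoc_last,
      smul_eq_mul, Pi.zero_apply, mul_zero, add_zero] at h
    rw [Matrix.mulVec, ← h]
    simp [dotProduct, transpose_apply, mul_comm]
  · have h := congrFun hsum (Fin.last n)
    rw [Finset.sum_apply, Fin.sum_univ_castSucc] at h
    simp only [hV, hC, Pi.smul_apply, Fin.snoc_castSucc, Fin.snoc_last,
      smul_eq_mul, mul_one] at h
    have hmu := hY (Fin.last k)
    have : b ⬝ᵥ (fun i => Y i.castSucc) = ∑ i : Fin k, Y i.castSucc * b i := by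
      simp [dotProduct, mul_comm]
    rw [this]
    linarith

/-- Polyhedron containment characterization via a nonnegative certificate
matrix `X`, column by column. -/
theorem polyhedron_containment_certificate
    (k n m : ℕ) (G : Matrix (Fin k) (Fin n) ℝ) (g : Fin k → ℝ)
    (H : Matrix (Fin m) (Fin n) ℝ) (h : Fin m → ℝ)
    (hne : {p : Fin n → ℝ | G.mulVec p ≤ g}.Nonempty) :
    {p : Fin n → ℝ | G.mulVec p ≤ g} ⊆ {p : Fin n → ℝ | H.mulVec p ≤ h} ↔
    ∃ X : Matrix (Fin k) (Fin m) ℝ,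
      (∀ i j, 0 ≤ X i j) ∧ Gᵀ * X = Hᵀ ∧
      ∀ i : Fin m, g ⬝ᵥ (fun j => X j i) ≤ h i := by
  constructor
  · intro hsub
    have hex : ∀ i : Fin m, ∃ y : Fin k → ℝ,
        (∀ l, 0 ≤ y l) ∧ Gᵀ.mulVec y = H i ∧ g ⬝ᵥ y ≤ h i := by
      intro i
      refine farkas_affine G g hne (H i) (h i) (fun p hp => ?_)
      have := hsub hp
      exact this i
    choose Y hY0 hYsum hYle using hex
    refine ⟨Matrix.of (fun j i => Y i j), fun j i => hY0 i j, ?_, fun i => ?_⟩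
    · ext j i
      have := congrFun (hYsum i) j
      rw [Matrix.mul_apply]
      simp only [Matrix.mulVec, dotProduct, transpose_apply, Matrix.of_apply] at this ⊢
      rw [this]
    · simpa using hYle i
  · rintro ⟨X, hX0, hXG, hXg⟩ p hp
    intro i
    have hH : H = Xᵀ * G := by
      have := congrArg Matrix.transpose hXG
      rw [Matrix.transpose_mul, Matrix.transpose_transpose, Matrix.transpose_transpose]
        at this
      exact this.symm
    rw [hH]
    have h1 : (Xᵀ * G).mulVec p = Xᵀ.mulVec (G.mulVec p) := by
      rw [Matrix.mulVec_mulVec]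
    rw [h1]
    have h2 : Xᵀ.mulVec (G.mulVec p) i = ∑ l, X l i * G.mulVec p l := by
      simp [Matrix.mulVec, dotProduct, transpose_apply]
    rw [h2]
    calc ∑ l, X l i * G.mulVec p l ≤ ∑ l, X l i * g l := by
          refine Finset.sum_le_sum fun l _ => mul_le_mul_of_nonneg_left (hp l) (hX0 l i)
      _ = g ⬝ᵥ (fun j => X j i) := by simp [dotProduct, mul_comm]
      _ ≤ h i := hXg i
end
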